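/- arXiv:math/0110065 — 3 statements merged into one kernel-verified Lean document; each statement's English description precedes it below -/
import Mathlib

section
/- On a nearly Kähler manifold, Gray's identity 2⟨(∇_X r)Y, Z⟩ = ⟨r((∇_X J)Y), JZ⟩ + ⟨r(JY), (∇_X J)Z⟩ is equivalent to the statement that r is parallel with respect to the canonical Hermitian connection: ∇̄ r = 0. -/
/-!
Pairing with `Z`, the difference between the two connections turns `∇̄_X r - r ∇̄_X` into
`∇_X r - r ∇_X` plus `½ [(∇_X J) J, r]`. Since `r` commutes with `J`, while `∇_X J` anticommutes
with `J` and is skew, this correction term is exactly `-½` times the right-hand side of Gray's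
identity. Hence Gray's identity says that `⟨(∇̄_X r) Y, Z⟩` vanishes for all `Z`, which by
nondegeneracy of `g` is `∇̄ r = 0`.
-/

section NearlyKahler

variable {M V : Type*} [AddCommGroup V] [Module ℝ V]
  {g : V →ₗ[ℝ] V →ₗ[ℝ] (M → ℝ)} {J r : V →ₗ[ℝ] V} {DJ : V → V → V}

lemma inner_DJ_J_apply_eq_neg (hAskew : ∀ X Y Z, g (DJ X Y) Z = -(g (DJ X Z) Y))
    (hgsymm : ∀ X Y, g X Y = g Y X) (hrJ : ∀ X, r (J X) = J (r X)) (X Y Z : V) :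
    g (DJ X (J (r Y))) Z = -(g (r (J Y)) (DJ X Z)) := by
  rw [← hrJ, hAskew, hgsymm]

lemma inner_r_DJ_J_apply_eq (hAJ : ∀ X Y, DJ X (J Y) = -J (DJ X Y))
    (hJskew : ∀ X Y, g (J X) Y = -(g X (J Y))) (hrJ : ∀ X, r (J X) = J (r X)) (X Y Z : V) :
    g (r (DJ X (J Y))) Z = g (r (DJ X Y)) (J Z) := by
  rw [hAJ, map_neg, hrJ, map_neg, LinearMap.neg_apply, hJskew, neg_neg]

lemma two_smul_inner_canonical_derivative_eq {D Dbar : V → V → V}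
    (hgsymm : ∀ X Y, g X Y = g Y X) (hJskew : ∀ X Y, g (J X) Y = -(g X (J Y)))
    (hAJ : ∀ X Y, DJ X (J Y) = -J (DJ X Y))
    (hAskew : ∀ X Y Z, g (DJ X Y) Z = -(g (DJ X Z) Y))
    (hrJ : ∀ X, r (J X) = J (r X))
    (hDbar : ∀ X Y, Dbar X Y = D X Y + (1/2 : ℝ) • DJ X (J Y)) (X Y Z : V) :
    (2 : ℝ) • g (Dbar X (r Y) - r (Dbar X Y)) Z
      = (2 : ℝ) • g (D X (r Y) - r (D X Y)) Z
        - (g (r (DJ X Y)) (J Z) + g (r (J Y)) (DJ X Z)) := by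
  rw [hDbar, hDbar]
  simp only [map_add, map_smul, map_sub, LinearMap.add_apply, LinearMap.sub_apply,
    LinearMap.smul_apply, inner_DJ_J_apply_eq_neg hAskew hgsymm hrJ,
    inner_r_DJ_J_apply_eq hAJ hJskew hrJ]
  module

end NearlyKahler

theorem gray_identity_iff_r_parallel_general
    (M VF : Type) [AddCommGroup VF] [Module ℝ VF]
    (g : VF →ₗ[ℝ] VF →ₗ[ℝ] (M → ℝ))
    (D : VF → VF → VF)
    (J : VF →ₗ[ℝ] VF)
    (DJ : VF →ₗ[ℝ] VF →ₗ[ℝ] VF)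
    (r : VF →ₗ[ℝ] VF)
    (Dbar : VF → VF → VF)
    -- almost Hermitian structure
    (hgsymm : ∀ X Y, g X Y = g Y X)
    (hnondeg : ∀ X, (∀ Z, g X Z = 0) → X = 0)
    (hJskew : ∀ X Y, g (J X) Y = -(g X (J Y)))
    -- nearly Kähler condition and standard algebraic properties of ∇J
    (hAJ : ∀ X Y, DJ X (J Y) = -J (DJ X Y))
    (hAskew : ∀ X Y Z, g (DJ X Y) Z = -(g (DJ X Z) Y))
    -- algebraic properties of r: symmetric and commuting with J
    (hrJ : ∀ X, r (J X) = J (r X))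
    -- the canonical Hermitian connection
    (hDbar : ∀ X Y, Dbar X Y = D X Y + (1/2 : ℝ) • DJ X (J Y)) :
    (∀ X Y Z, (2 : ℝ) • g (D X (r Y) - r (D X Y)) Z
        = g (r (DJ X Y)) (J Z) + g (r (J Y)) (DJ X Z))
    ↔ (∀ X Y, Dbar X (r Y) = r (Dbar X Y)) := by
  have key := two_smul_inner_canonical_derivative_eq hgsymm hJskew hAJ hAskew hrJ hDbar
  constructor
  · intro hGray X Y
    refine sub_eq_zero.mp (hnondeg _ fun Z => ?_)
    have h := key X Y Z
    rw [hGray, sub_self] at h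
    exact (smul_eq_zero.mp h).resolve_left two_ne_zero
  · intro hParallel X Y Z
    have h := key X Y Z
    rw [hParallel, sub_self, map_zero, LinearMap.zero_apply, smul_zero] at h
    exact sub_eq_zero.mp h.symm

theorem gray_identity_iff_r_parallel
    (M VF : Type) [AddCommGroup VF] [Module ℝ VF]
    (g : VF →ₗ[ℝ] VF →ₗ[ℝ] (M → ℝ))
    (deriv : VF → (M → ℝ) → (M → ℝ))
    (D : VF → VF → VF)
    (J : VF →ₗ[ℝ] VF)
    (DJ : VF →ₗ[ℝ] VF →ₗ[ℝ] VF)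
    (r : VF →ₗ[ℝ] VF)
    (Dbar : VF → VF → VF)
    -- almost Hermitian structure
    (hgsymm : ∀ X Y, g X Y = g Y X)
    (hnondeg : ∀ X, (∀ Z, g X Z = 0) → X = 0)
    (hJJ : ∀ X, J (J X) = -X)
    (hJskew : ∀ X Y, g (J X) Y = -(g X (J Y)))
    -- the Levi-Civita connection is metric
    (hmetric : ∀ X Y Z, deriv X (g Y Z) = g (D X Y) Z + g Y (D X Z))
    -- `DJ` is the covariant derivative of `J`
    (hDJ : ∀ X Y, DJ X Y = D X (J Y) - J (D X Y))
    -- nearly Kähler condition and standard algebraic properties of ∇J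
    (hNK : ∀ X, DJ X X = 0)
    (hAJ : ∀ X Y, DJ X (J Y) = -J (DJ X Y))
    (hAskew : ∀ X Y Z, g (DJ X Y) Z = -(g (DJ X Z) Y))
    -- algebraic properties of r: symmetric and commuting with J
    (hrsymm : ∀ X Y, g (r X) Y = g X (r Y))
    (hrJ : ∀ X, r (J X) = J (r X))
    -- the canonical Hermitian connection
    (hDbar : ∀ X Y, Dbar X Y = D X Y + (1/2 : ℝ) • DJ X (J Y)) :
    (∀ X Y Z, (2 : ℝ) • g (D X (r Y) - r (D X Y)) Z
        = g (r (DJ X Y)) (J Z) + g (r (J Y)) (DJ X Z))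
    ↔ (∀ X Y, Dbar X (r Y) = r (Dbar X Y)) :=
  gray_identity_iff_r_parallel_general M VF g D J DJ r Dbar hgsymm hnondeg hJskew hAJ hAskew hrJ
    hDbar
end

section
/- Let (M^{2n}, g, J) be strict nearly Kähler with TM = L ⊕ E a ∇̄-parallel, g-orthogonal, J-stable splitting with rank L = 2. Then for X, Y ∈ E and V ∈ L: R̄(X,Y,V,JV) = −2⟨(∇_V J)²X, JY⟩, and R̄(X,V,V,JV) = 0. -/
/-
Since `A V (JV) = 0` for `V ∈ L`, formula (2.4) expresses each of `R̄(X,JV,Y,V)`, `R̄(Y,JV,X,V)`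
and `R̄(X,Y,V,JV)` as the corresponding value of `R` plus a multiple of the single number
`t = ⟪J (A V X), A V Y⟫`. The first two vanish because `R̄` pairs `E` with `L` to zero, which
determines `R(X,JV,Y,V)` and `R(Y,JV,X,V)`; the first Bianchi identity then gives
`R(X,Y,V,JV) = 3t/2`, hence `R̄(X,Y,V,JV) = 2t = -2⟪(∇_V J)² X, JY⟫`. The second identity is
the vanishing of `R̄(V,JV,X,V)`, which equals `R̄(X,V,V,JV)` because all torsion terms vanish.
-/

open RealInnerProductSpace

section CurvatureTensor

variable {V : Type*} {R : V → V → V → V → ℝ}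

theorem curvature_eq_sub_of_bianchi (hRsymm : ∀ x y z w, R x y z w = R z w x y)
    (hRskew : ∀ x y z w, R x y z w = -R y x z w)
    (hBianchi : ∀ x y z w, R x y z w + R y z x w + R z x y w = 0) (x y z w : V) :
    R x y z w = R y w x z - R x w y z := by
  have hyzx : R y z x w = R x w y z := hRsymm y z x w
  have hzxy : R z x y w = -R y w x z := by rw [hRskew, hRsymm]
  linarith [hBianchi x y z w]

end CurvatureTensor

section NearlyKahler

variable {V : Type*} [NormedAddCommGroup V] [InnerProductSpace ℝ V]
  {J : V →ₗ[ℝ] V} {A : V →ₗ[ℝ] V →ₗ[ℝ] V}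

theorem inner_apply_left_eq_neg_inner_apply_right (hJJ : ∀ x, J (J x) = -x)
    (hJiso : ∀ x y, ⟪J x, J y⟫ = ⟪x, y⟫) (a b : V) : ⟪J a, b⟫ = -⟪a, J b⟫ := by
  rw [← hJiso a (J b), hJJ, inner_neg_right, neg_neg]

theorem inner_apply_left_eq_neg_inner_apply_left_swap (hJJ : ∀ x, J (J x) = -x)
    (hJiso : ∀ x y, ⟪J x, J y⟫ = ⟪x, y⟫) (a b : V) : ⟪J a, b⟫ = -⟪J b, a⟫ := by
  rw [inner_apply_left_eq_neg_inner_apply_right hJJ hJiso, real_inner_comm]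

theorem apply_apply_J_eq (hA : A.IsAlt) (hAJ : ∀ x y, A x (J y) = -J (A x y)) (x v : V) :
    A x (J v) = J (A v x) := by
  rw [hAJ, ← hA.neg, map_neg, neg_neg]

theorem apply_J_apply_eq (hA : A.IsAlt) (hAJ : ∀ x y, A x (J y) = -J (A x y)) (v x : V) :
    A (J v) x = -J (A v x) := by
  rw [← hA.neg, apply_apply_J_eq hA hAJ]

theorem inner_apply_apply_J_eq (hJJ : ∀ x, J (J x) = -x) (hJiso : ∀ x y, ⟪J x, J y⟫ = ⟪x, y⟫)
    (hAskew : ∀ x y z, ⟪A x y, z⟫ = -⟪A x z, y⟫) (hAJ : ∀ x y, A x (J y) = -J (A x y))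
    (v x y : V) : ⟪A v (A v x), J y⟫ = -⟪J (A v x), A v y⟫ := by
  rw [hAskew, hAJ, inner_neg_left, neg_neg,
    inner_apply_left_eq_neg_inner_apply_left_swap hJJ hJiso]

/-- The right-hand side of formula (2.4): the curvature `R̄` of the canonical Hermitian
connection in terms of the Riemann curvature `R` and `A x y = (∇_x J) y`. -/
noncomputable def hermitianCurvature (R : V → V → V → V → ℝ) (A : V →ₗ[ℝ] V →ₗ[ℝ] V)
    (x y z w : V) : ℝ :=
  R x y z w - (1/2 : ℝ) * ⟪A x y, A z w⟫ + (1/4 : ℝ) * (⟪A x z, A y w⟫ - ⟪A x w, A y z⟫)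

variable (R : V → V → V → V → ℝ) {v : V}

theorem hermitianCurvature_apply_J (hJJ : ∀ x, J (J x) = -x)
    (hJiso : ∀ x y, ⟪J x, J y⟫ = ⟪x, y⟫) (hA : A.IsAlt) (hAJ : ∀ x y, A x (J y) = -J (A x y))
    (hv : A v (J v) = 0) (x y : V) :
    hermitianCurvature R A x y v (J v) = R x y v (J v) + ⟪J (A v x), A v y⟫ / 2 := by
  have hJskew := inner_apply_left_eq_neg_inner_apply_right hJJ hJiso (A v x) (A v y)
  simp only [hermitianCurvature, hv, inner_zero_right, apply_apply_J_eq hA hAJ, ← hA.neg v x,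
    ← hA.neg v y, inner_neg_left, inner_neg_right]
  linarith

theorem hermitianCurvature_J_apply (hJJ : ∀ x, J (J x) = -x)
    (hJiso : ∀ x y, ⟪J x, J y⟫ = ⟪x, y⟫) (hA : A.IsAlt) (hAJ : ∀ x y, A x (J y) = -J (A x y))
    (x y : V) :
    hermitianCurvature R A x (J v) y v = R x (J v) y v + 3 / 4 * ⟪J (A v x), A v y⟫ := by
  have hJskew := inner_apply_left_eq_neg_inner_apply_right hJJ hJiso (A v x) (A v y)
  simp only [hermitianCurvature, apply_J_apply_eq hA hAJ, hA.self_eq_zero, map_zero,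
    neg_zero, inner_zero_right, apply_apply_J_eq hA hAJ, ← hA.neg v x, ← hA.neg v y,
    inner_neg_left, inner_neg_right]
  linarith

theorem hermitianCurvature_apply_self_apply_J (hA : A.IsAlt) (hv : A v (J v) = 0) (x : V) :
    hermitianCurvature R A x v v (J v) = R x v v (J v) := by
  simp [hermitianCurvature, hv, hA.self_eq_zero]

theorem hermitianCurvature_self_J_apply (hA : A.IsAlt) (hv : A v (J v) = 0) (x : V) :
    hermitianCurvature R A v (J v) x v = R v (J v) x v := by
  have hJv : A (J v) v = 0 := by rw [← hA.neg, hv, neg_zero]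
  simp [hermitianCurvature, hv, hJv, hA.self_eq_zero]

end NearlyKahler

theorem reducibleNK_curvature_identities_general
    (V : Type) [NormedAddCommGroup V] [InnerProductSpace ℝ V]
    (J : V →ₗ[ℝ] V)
    (A : V →ₗ[ℝ] V →ₗ[ℝ] V)
    (R Rbar : V → V → V → V → ℝ)
    (L E : Submodule ℝ V)
    -- almost Hermitian structure, strict nearly Kähler condition
    (hJJ : ∀ x, J (J x) = -x)
    (hJiso : ∀ x y, ⟪J x, J y⟫ = ⟪x, y⟫)
    (hNK : ∀ x, A x x = 0)
    (hAskew : ∀ x y z, ⟪A x y, z⟫ = -⟪A x z, y⟫)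
    (hAJ : ∀ x y, A x (J y) = -J (A x y))
    -- the torsion vanishes on L and maps L × E to E
    (hTL : ∀ v ∈ L, ∀ w ∈ L, A v (J w) = 0)
    -- symmetries and the first Bianchi identity for R
    (hRsymm : ∀ x y z w, R x y z w = R z w x y)
    (hRskew1 : ∀ x y z w, R x y z w = -R y x z w)
    (hBianchi : ∀ x y z w, R x y z w + R y z x w + R z x y w = 0)
    -- formula (2.4) relating R and R̄
    (hRbarR : ∀ x y z w, Rbar x y z w
      = R x y z w - (1/2 : ℝ) * ⟪A x y, A z w⟫
        + (1/4 : ℝ) * (⟪A x z, A y w⟫ - ⟪A x w, A y z⟫))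
    -- L and E are ∇̄-parallel: R̄ pairs E with L to zero
    (hRbar0 : ∀ u w, ∀ x ∈ E, ∀ v ∈ L, Rbar u w x v = 0) :
    (∀ x ∈ E, ∀ y ∈ E, ∀ v ∈ L,
      Rbar x y v (J v) = -2 * ⟪A v (A v x), J y⟫)
    ∧ (∀ x ∈ E, ∀ v ∈ L, Rbar x v v (J v) = 0) := by
  obtain rfl : Rbar = hermitianCurvature R A := by
    funext x y z w
    exact hRbarR x y z w
  refine ⟨fun x hx y hy v hv => ?_, fun x hx v hv => ?_⟩
  · have hv0 := hTL v hv v hv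
    have hxy := hRbar0 x (J v) y hy v hv
    have hyx := hRbar0 y (J v) x hx v hv
    rw [hermitianCurvature_J_apply R hJJ hJiso hNK hAJ] at hxy hyx
    rw [inner_apply_left_eq_neg_inner_apply_left_swap hJJ hJiso (A v y)] at hyx
    rw [hermitianCurvature_apply_J R hJJ hJiso hNK hAJ hv0,
      curvature_eq_sub_of_bianchi hRsymm hRskew1 hBianchi,
      inner_apply_apply_J_eq hJJ hJiso hAskew hAJ]
    linarith
  · have hv0 := hTL v hv v hv
    rw [hermitianCurvature_apply_self_apply_J R hNK hv0, hRsymm,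
      ← hermitianCurvature_self_J_apply R hNK hv0]
    exact hRbar0 v (J v) x hx v hv

theorem reducibleNK_curvature_identities
    (V : Type) [NormedAddCommGroup V] [InnerProductSpace ℝ V]
    [FiniteDimensional ℝ V]
    (n : ℕ) (hdim : Module.finrank ℝ V = 2 * n)
    (J : V →ₗ[ℝ] V)
    (A : V →ₗ[ℝ] V →ₗ[ℝ] V)
    (R Rbar : V → V → V → V → ℝ)
    (L E : Submodule ℝ V)
    -- almost Hermitian structure, strict nearly Kähler condition
    (hJJ : ∀ x, J (J x) = -x)
    (hJiso : ∀ x y, ⟪J x, J y⟫ = ⟪x, y⟫)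
    (hNK : ∀ x, A x x = 0)
    (hstrict : ∀ x, x ≠ 0 → ∃ y, A x y ≠ 0)
    (hAskew : ∀ x y z, ⟪A x y, z⟫ = -⟪A x z, y⟫)
    (hAJ : ∀ x y, A x (J y) = -J (A x y))
    -- the splitting TM = L ⊕ E : orthogonal, J-stable, rank L = 2
    (hcompl : IsCompl L E)
    (horth : ∀ v ∈ L, ∀ x ∈ E, ⟪v, x⟫ = 0)
    (hJL : ∀ v ∈ L, J v ∈ L) (hJE : ∀ x ∈ E, J x ∈ E)
    (hrankL : Module.finrank ℝ L = 2)
    -- the torsion vanishes on L and maps L × E to E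
    (hTL : ∀ v ∈ L, ∀ w ∈ L, A v (J w) = 0)
    (hTLE : ∀ v ∈ L, ∀ x ∈ E, A v (J x) ∈ E)
    -- symmetries and the first Bianchi identity for R
    (hRsymm : ∀ x y z w, R x y z w = R z w x y)
    (hRskew1 : ∀ x y z w, R x y z w = -R y x z w)
    (hRskew2 : ∀ x y z w, R x y z w = -R x y w z)
    (hBianchi : ∀ x y z w, R x y z w + R y z x w + R z x y w = 0)
    -- formula (2.4) relating R and R̄
    (hRbarR : ∀ x y z w, Rbar x y z w
      = R x y z w - (1/2 : ℝ) * ⟪A x y, A z w⟫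
        + (1/4 : ℝ) * (⟪A x z, A y w⟫ - ⟪A x w, A y z⟫))
    -- L and E are ∇̄-parallel: R̄ pairs E with L to zero
    (hRbar0 : ∀ u w, ∀ x ∈ E, ∀ v ∈ L, Rbar u w x v = 0) :
    (∀ x ∈ E, ∀ y ∈ E, ∀ v ∈ L,
      Rbar x y v (J v) = -2 * ⟪A v (A v x), J y⟫)
    ∧ (∀ x ∈ E, ∀ v ∈ L, Rbar x v v (J v) = 0) :=
  reducibleNK_curvature_identities_general V J A R Rbar L E hJJ hJiso hNK hAskew hAJ hTL hRsymm
    hRskew1 hBianchi hRbarR hRbar0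
end

section
/- Let (M^{2n}, g, J) be strict nearly Kähler with holonomy of the canonical Hermitian connection contained in U(1) × U(n−1), giving TM = L ⊕ E with rank L = 2. Then the tensor r has exactly two eigenvalues, k(n−1)/2 on L and k on E, where F|_E = (k/4)·Id with ⟨FX,Y⟩ = −(1/2)Tr_L((∇_X J)(∇_Y J)). -/
/-!
Since `L` has rank 2 and is `J`-stable, it is spanned by `v, J v` for any nonzero `v ∈ L`, so `A`
vanishes on `L × L` (as `A v (J v) = -J (A v v) = 0`), and for `x ∈ E` the form
`⟪A x ·, A x ·⟫` on `L` is `J`-invariant, hence a multiple of the metric; `F|_E = (k/4)·Id`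
fixes the multiple to `(k/4)|x|²`. Summing over the `2n - 2` frame vectors in `E` gives
`r|_L = k(n-1)/2`.

For `x, y ∈ E` the matrix `⟪A x eᵢ, eⱼ⟫` has only the blocks `L × E` and `E × L`, and the
skew-symmetry of `A x` makes them transposes of each other. Hence both halves of
`Σᵢ ⟪A x eᵢ, A y eᵢ⟫` equal `Σ_{eⱼ ∈ L} ⟪A x eⱼ, A y eⱼ⟫ = 2⟪F x, y⟫ = (k/2)⟪x, y⟫`, so
`r|_E = k`. The mixed terms vanish because `A` maps `E × L` into `E` and `E × E` into `L`.

In the statement `A x y = (∇_x J) y`, and `inL i` says that the frame vector `b i` lies in `L`.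
-/

open RealInnerProductSpace Finset Module

theorem Module.Basis.card_eq_finrank_of_isCompl {ι K V : Type*} [Fintype ι] [DivisionRing K]
    [AddCommGroup V] [Module K V] (b : Basis ι K V) {L E : Submodule K V} (hLE : IsCompl L E)
    {s : Finset ι} (hbL : ∀ i ∈ s, b i ∈ L) (hbE : ∀ i ∉ s, b i ∈ E) :
    #s = finrank K L := by
  classical
  have := Module.Finite.of_basis b
  have card_le : ∀ (t : Finset ι) (M : Submodule K V), (∀ i ∈ t, b i ∈ M) → #t ≤ finrank K M := by
    intro t M ht
    have hli : LinearIndependent K (fun i : t => b i) :=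
      b.linearIndependent.comp _ Subtype.val_injective
    calc #t = finrank K (Submodule.span K (Set.range fun i : t => b i)) := by
          rw [finrank_span_eq_card hli, Fintype.card_coe]
      _ ≤ finrank K M :=
          Submodule.finrank_mono
            (Submodule.span_le.mpr (Set.range_subset_iff.mpr fun i => ht i i.2))
  have hL := card_le s L hbL
  have hE := card_le sᶜ E fun i hi => hbE i (mem_compl.mp hi)
  have hsum : #s + #sᶜ = finrank K L + finrank K E := by
    rw [card_add_card_compl, Submodule.finrank_add_eq_of_isCompl hLE, finrank_eq_card_basis b]
  omega

theorem OrthonormalBasis.sum_inner_mul_inner_of_inner_eq_zero {ι 𝕜 V : Type*} [Fintype ι]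
    [RCLike 𝕜] [NormedAddCommGroup V] [InnerProductSpace 𝕜 V] (b : OrthonormalBasis ι 𝕜 V)
    {s : Finset ι} {x : V} (hx : ∀ i ∉ s, inner 𝕜 x (b i) = 0) (y : V) :
    ∑ i ∈ s, inner 𝕜 x (b i) * inner 𝕜 (b i) y = inner 𝕜 x y := by
  rw [← b.sum_inner_mul_inner x y]
  exact sum_subset (subset_univ s) fun i _ hi => by rw [hx i hi, zero_mul]

theorem ext_inner_right_of_codisjoint {𝕜 V : Type*} [RCLike 𝕜] [NormedAddCommGroup V]
    [InnerProductSpace 𝕜 V] {L E : Submodule 𝕜 V} (h : Codisjoint L E) {a a' : V}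
    (hL : ∀ w ∈ L, inner 𝕜 a w = inner 𝕜 a' w) (hE : ∀ y ∈ E, inner 𝕜 a y = inner 𝕜 a' y) :
    a = a' := by
  refine ext_inner_right 𝕜 fun z => ?_
  obtain ⟨w, hw, y, hy, rfl⟩ := Submodule.mem_sup.mp (h.eq_top ▸ Submodule.mem_top : z ∈ L ⊔ E)
  rw [inner_add_right, inner_add_right, hL w hw, hE y hy]

section ComplexStructure

variable {V : Type*} [NormedAddCommGroup V] [InnerProductSpace ℝ V] {J : V →ₗ[ℝ] V}

theorem inner_apply_self_eq_zero_of_sq_eq_neg (hJJ : ∀ x, J (J x) = -x)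
    (hJiso : ∀ x y, ⟪J x, J y⟫ = ⟪x, y⟫) (u : V) : ⟪J u, u⟫ = 0 := by
  have h := hJiso u (J u)
  rw [hJJ, inner_neg_right] at h
  linarith [real_inner_comm u (J u)]

theorem span_pair_apply_eq_of_finrank_eq_two (hJJ : ∀ x, J (J x) = -x)
    (hJiso : ∀ x y, ⟪J x, J y⟫ = ⟪x, y⟫) {L : Submodule ℝ V} (hL : finrank ℝ L = 2)
    (hJL : ∀ v ∈ L, J v ∈ L) {v : V} (hv : v ∈ L) (hv0 : v ≠ 0) :
    Submodule.span ℝ {v, J v} = L := by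
  have : Module.Finite ℝ L := Module.finite_of_finrank_pos (by omega)
  have hJv0 : J v ≠ 0 := fun h => hv0 (by simpa [h] using (hJJ v).symm)
  have hli : LinearIndependent ℝ ![v, J v] := by
    refine linearIndependent_of_ne_zero_of_inner_eq_zero
      (by simp [Fin.forall_fin_two, hv0, hJv0]) ?_
    intro i j hij
    have h := inner_apply_self_eq_zero_of_sq_eq_neg hJJ hJiso v
    fin_cases i <;> fin_cases j <;> simp_all [real_inner_comm v]
  apply Submodule.eq_of_le_of_finrank_eq
  · exact Submodule.span_le.mpr (Set.insert_subset hv (Set.singleton_subset_iff.mpr (hJL v hv)))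
  · rw [← Matrix.range_cons_cons_empty v (J v) ![], finrank_span_eq_card hli, hL]
    simp

theorem inner_map_map_mul_inner_self (hJJ : ∀ x, J (J x) = -x)
    (hJiso : ∀ x y, ⟪J x, J y⟫ = ⟪x, y⟫) {L : Submodule ℝ V} (hL : finrank ℝ L = 2)
    (hJL : ∀ v ∈ L, J v ∈ L) {T : V →ₗ[ℝ] V} (hT : ∀ v, T (J v) = -J (T v))
    {u v w : V} (hu : u ∈ L) (hv : v ∈ L) (hw : w ∈ L) :
    ⟪T v, T w⟫ * ⟪u, u⟫ = ⟪T u, T u⟫ * ⟪v, w⟫ := by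
  rcases eq_or_ne u 0 with rfl | hu0
  · simp
  have hspan := span_pair_apply_eq_of_finrank_eq_two hJJ hJiso hL hJL hu hu0
  obtain ⟨a, c, rfl⟩ := Submodule.mem_span_pair.mp (hspan ▸ hv)
  obtain ⟨a', c', rfl⟩ := Submodule.mem_span_pair.mp (hspan ▸ hw)
  have hJ0 := inner_apply_self_eq_zero_of_sq_eq_neg hJJ hJiso
  have hJ0' : ∀ x, ⟪x, J x⟫ = 0 := fun x => by rw [real_inner_comm, hJ0]
  simp only [map_add, map_smul, hT, inner_add_left, inner_add_right, real_inner_smul_left,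
    real_inner_smul_right, inner_neg_left, inner_neg_right, hJiso, hJ0, hJ0']
  ring

theorem two_mul_inner_map_map_eq_sum_mul_inner (hJJ : ∀ x, J (J x) = -x)
    (hJiso : ∀ x y, ⟪J x, J y⟫ = ⟪x, y⟫) {L : Submodule ℝ V} (hL : finrank ℝ L = 2)
    (hJL : ∀ v ∈ L, J v ∈ L) {T : V →ₗ[ℝ] V} (hT : ∀ v, T (J v) = -J (T v))
    {ι : Type*} {e : ι → V} (he : Orthonormal ℝ e) {s : Finset ι} (hs : #s = 2)
    (heL : ∀ j ∈ s, e j ∈ L) {v w : V} (hv : v ∈ L) (hw : w ∈ L) :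
    2 * ⟪T v, T w⟫ = (∑ j ∈ s, ⟪T (e j), T (e j)⟫) * ⟪v, w⟫ := by
  have h := sum_congr rfl fun j hj =>
    inner_map_map_mul_inner_self hJJ hJiso hL hJL hT (heL j hj) hv hw
  have he1 : ∀ j, ⟪e j, e j⟫ = 1 := fun j => by rw [real_inner_self_eq_norm_sq, he.1 j, one_pow]
  simp only [he1, mul_one, sum_const, hs] at h
  rw [sum_mul, ← h, nsmul_eq_mul, Nat.cast_ofNat]

theorem apply_eq_zero_of_mem_of_finrank_eq_two (hJJ : ∀ x, J (J x) = -x)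
    (hJiso : ∀ x y, ⟪J x, J y⟫ = ⟪x, y⟫) {L : Submodule ℝ V} (hL : finrank ℝ L = 2)
    (hJL : ∀ v ∈ L, J v ∈ L) {A : V →ₗ[ℝ] V →ₗ[ℝ] V} (hNK : ∀ x, A x x = 0)
    (hAJ : ∀ x y, A x (J y) = -J (A x y)) {v w : V} (hv : v ∈ L) (hw : w ∈ L) : A v w = 0 := by
  rcases eq_or_ne v 0 with rfl | hv0
  · simp
  obtain ⟨a, c, rfl⟩ := Submodule.mem_span_pair.mp
    (span_pair_apply_eq_of_finrank_eq_two hJJ hJiso hL hJL hv hv0 ▸ hw)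
  simp [hAJ, hNK]

end ComplexStructure

section AdaptedFrame

variable {ι V : Type*} [Fintype ι] [DecidableEq ι] [NormedAddCommGroup V] [InnerProductSpace ℝ V]
  {A : V →ₗ[ℝ] V →ₗ[ℝ] V} {L E : Submodule ℝ V} {b : OrthonormalBasis ι ℝ V} {s : Finset ι}

theorem inner_apply_eq_inner_apply_rotate (hNK : ∀ x, A x x = 0)
    (hAskew : ∀ x y z, ⟪A x y, z⟫ = -⟪A x z, y⟫) (x y z : V) : ⟪A x y, z⟫ = ⟪A y z, x⟫ := by
  rw [← LinearMap.IsAlt.neg hNK y x, inner_neg_left, hAskew, neg_neg]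

theorem sum_inner_apply_apply_of_mem_E (hNK : ∀ x, A x x = 0)
    (hAskew : ∀ x y z, ⟪A x y, z⟫ = -⟪A x z, y⟫) (horth : ∀ v ∈ L, ∀ x ∈ E, ⟪v, x⟫ = 0)
    (hbL : ∀ i ∈ s, b i ∈ L) (hbE : ∀ i ∉ s, b i ∈ E)
    (hALL : ∀ v ∈ L, ∀ w ∈ L, A v w = 0) (hAE : ∀ x ∈ E, ∀ y ∈ E, A x y ∈ L)
    {x : V} (hx : x ∈ E) (y : V) :
    ∑ i, ⟪A (b i) x, A (b i) y⟫ = 2 * ∑ j ∈ s, ⟪A x (b j), A y (b j)⟫ := by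
  have hcompl : ∑ i ∈ sᶜ, ⟪A x (b i), A y (b i)⟫ = ∑ j ∈ s, ⟪A x (b j), A y (b j)⟫ :=
    calc ∑ i ∈ sᶜ, ⟪A x (b i), A y (b i)⟫
        = ∑ i ∈ sᶜ, ∑ j ∈ s, ⟪A x (b i), b j⟫ * ⟪b j, A y (b i)⟫ :=
          sum_congr rfl fun i hi => (b.sum_inner_mul_inner_of_inner_eq_zero (fun j hj =>
            horth _ (hAE x hx _ (hbE i (mem_compl.mp hi))) _ (hbE j hj)) _).symm
      _ = ∑ j ∈ s, ∑ i ∈ sᶜ, ⟪A x (b j), b i⟫ * ⟪b i, A y (b j)⟫ := by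
          rw [sum_comm]
          refine sum_congr rfl fun j _ => sum_congr rfl fun i _ => ?_
          rw [hAskew x (b i), real_inner_comm (A y (b i)), hAskew y (b i),
            real_inner_comm (b i) (A y (b j)), neg_mul_neg]
      _ = ∑ j ∈ s, ⟪A x (b j), A y (b j)⟫ :=
          sum_congr rfl fun j hj => b.sum_inner_mul_inner_of_inner_eq_zero (fun i hi => by
            rw [inner_apply_eq_inner_apply_rotate hNK hAskew,
              hALL _ (hbL j hj) _ (hbL i (by simpa using hi)), inner_zero_left]) _
  have hflip : ∀ i, ⟪A (b i) x, A (b i) y⟫ = ⟪A x (b i), A y (b i)⟫ := fun i => by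
    rw [← LinearMap.IsAlt.neg hNK x, ← LinearMap.IsAlt.neg hNK y, inner_neg_neg]
  rw [sum_congr rfl fun i _ => hflip i, ← sum_add_sum_compl s, hcompl, two_mul]

theorem sum_inner_apply_apply_of_mem_L {J : V →ₗ[ℝ] V} (hJJ : ∀ x, J (J x) = -x)
    (hJiso : ∀ x y, ⟪J x, J y⟫ = ⟪x, y⟫) (hL : finrank ℝ L = 2) (hJL : ∀ v ∈ L, J v ∈ L)
    (hAJ : ∀ x y, A x (J y) = -J (A x y)) (hbL : ∀ i ∈ s, b i ∈ L) (hbE : ∀ i ∉ s, b i ∈ E)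
    (hALL : ∀ v ∈ L, ∀ w ∈ L, A v w = 0) (hs : #s = 2) {c : ℝ}
    (hFs : ∀ x ∈ E, ∑ j ∈ s, ⟪A x (b j), A x (b j)⟫ = c * ⟪x, x⟫)
    {v w : V} (hv : v ∈ L) (hw : w ∈ L) :
    ∑ i, ⟪A (b i) v, A (b i) w⟫ = #sᶜ * (c / 2 * ⟪v, w⟫) := by
  have hs0 : ∑ i ∈ s, ⟪A (b i) v, A (b i) w⟫ = 0 :=
    sum_eq_zero fun i hi => by rw [hALL _ (hbL i hi) v hv, inner_zero_left]
  have hsc : ∀ i ∈ sᶜ, ⟪A (b i) v, A (b i) w⟫ = c / 2 * ⟪v, w⟫ := fun i hi => by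
    have h := two_mul_inner_map_map_eq_sum_mul_inner hJJ hJiso hL hJL (hAJ (b i))
      b.orthonormal hs hbL hv hw
    rw [hFs _ (hbE i (mem_compl.mp hi)), real_inner_self_eq_norm_sq, b.orthonormal.1 i] at h
    linarith
  rw [← sum_add_sum_compl s, hs0, zero_add, sum_congr rfl hsc, sum_const, nsmul_eq_mul]

theorem inner_apply_apply_eq_zero_of_mem_L_of_mem_E (hNK : ∀ x, A x x = 0)
    (hAskew : ∀ x y z, ⟪A x y, z⟫ = -⟪A x z, y⟫) (hbL : ∀ i ∈ s, b i ∈ L)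
    (hbE : ∀ i ∉ s, b i ∈ E) (hALL : ∀ v ∈ L, ∀ w ∈ L, A v w = 0)
    (hAE : ∀ x ∈ E, ∀ y ∈ E, A x y ∈ L) {v x : V} (hv : v ∈ L) (hx : x ∈ E) (i : ι) :
    ⟪A (b i) v, A (b i) x⟫ = 0 := by
  by_cases hi : i ∈ s
  · rw [hALL _ (hbL i hi) v hv, inner_zero_left]
  · rw [inner_apply_eq_inner_apply_rotate hNK hAskew, hALL v hv _ (hAE _ (hbE i hi) x hx),
      inner_zero_left]

end AdaptedFrame

theorem reducibleNK_r_eigenvalues_general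
    (V : Type) [NormedAddCommGroup V] [InnerProductSpace ℝ V]
    (n : ℕ)
    (b : OrthonormalBasis (Fin (2 * n)) ℝ V)
    (J : V →ₗ[ℝ] V)
    (A : V →ₗ[ℝ] V →ₗ[ℝ] V)
    (r F : V →ₗ[ℝ] V)
    (L E : Submodule ℝ V)
    -- almost Hermitian structure, strict nearly Kähler condition
    (hJJ : ∀ x, J (J x) = -x)
    (hJiso : ∀ x y, ⟪J x, J y⟫ = ⟪x, y⟫)
    (hNK : ∀ x, A x x = 0)
    (hAskew : ∀ x y z, ⟪A x y, z⟫ = -⟪A x z, y⟫)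
    (hAJ : ∀ x y, A x (J y) = -J (A x y))
    -- the splitting TM = L ⊕ E : orthogonal, J-stable, rank L = 2
    (hcompl : IsCompl L E)
    (horth : ∀ v ∈ L, ∀ x ∈ E, ⟪v, x⟫ = 0)
    (hJL : ∀ v ∈ L, J v ∈ L)
    (hrankL : Module.finrank ℝ L = 2)
    -- the frame is adapted to the splitting
    (inL : Fin (2 * n) → Prop) [DecidablePred inL]
    (hadapt : ∀ i, if inL i then b i ∈ L else b i ∈ E)
    -- definition of r and of F = −(1/2) Tr_L((∇_· J)(∇_· J))
    (hr : ∀ x y, ⟪r x, y⟫ = ∑ i, ⟪A (b i) x, A (b i) y⟫)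
    (hF : ∀ x y, ⟪F x, y⟫
      = -(1/2 : ℝ) * ∑ i ∈ Finset.univ.filter inL, ⟪A x (A y (b i)), b i⟫)
    -- structural facts from Proposition 4.1
    (k : ℝ)
    (hFE : ∀ x ∈ E, F x = (k / 4) • x)
    (hAE : ∀ x ∈ E, ∀ y ∈ E, A x y ∈ L) :
    (∀ v ∈ L, r v = (k * (n - 1) / 2) • v)
    ∧ (∀ x ∈ E, r x = k • x) := by
  set s := univ.filter inL
  have hbL : ∀ i ∈ s, b i ∈ L := fun i hi => by
    simpa [(mem_filter.mp hi).2] using hadapt i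
  have hbE : ∀ i ∉ s, b i ∈ E := fun i hi => by
    simpa [show ¬inL i by simpa [s] using hi] using hadapt i
  have hALL : ∀ v ∈ L, ∀ w ∈ L, A v w = 0 := fun v hv w hw =>
    apply_eq_zero_of_mem_of_finrank_eq_two hJJ hJiso hrankL hJL hNK hAJ hv hw
  have hFs : ∀ x ∈ E, ∀ y, ∑ j ∈ s, ⟪A x (b j), A y (b j)⟫ = k / 2 * ⟪x, y⟫ := by
    intro x hx y
    have h := hF x y
    simp only [hAskew x (A y _), sum_neg_distrib, hFE x hx,
      real_inner_smul_left] at h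
    linarith
  have hs : #s = 2 :=
    (b.toBasis.card_eq_finrank_of_isCompl hcompl (by simpa using hbL) (by simpa using hbE)).trans
      hrankL
  have hsc : (#sᶜ : ℝ) = 2 * n - 2 := by
    have h := card_add_card_compl s
    rw [hs, Fintype.card_fin] at h
    rw [eq_sub_iff_add_eq', ← Nat.cast_ofNat, ← Nat.cast_add, h, Nat.cast_mul, Nat.cast_ofNat]
  have hcross := fun {v x : V} (hv : v ∈ L) (hx : x ∈ E) =>
    inner_apply_apply_eq_zero_of_mem_L_of_mem_E hNK hAskew hbL hbE hALL hAE hv hx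
  refine ⟨fun v hv => ext_inner_right_of_codisjoint hcompl.codisjoint (fun w hw => ?_)
    (fun y hy => ?_), fun x hx => ext_inner_right_of_codisjoint hcompl.codisjoint
    (fun w hw => ?_) (fun y hy => ?_)⟩
  · rw [hr, sum_inner_apply_apply_of_mem_L hJJ hJiso hrankL hJL hAJ hbL hbE hALL hs
      (fun x hx => hFs x hx x) hv hw, hsc, real_inner_smul_left]
    ring
  · rw [hr, real_inner_smul_left, horth v hv y hy, mul_zero]
    exact sum_eq_zero fun i _ => hcross hv hy i
  · rw [hr, real_inner_smul_left, real_inner_comm, horth w hw x hx, mul_zero]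
    exact sum_eq_zero fun i _ => by rw [real_inner_comm]; exact hcross hw hx i
  · rw [hr, sum_inner_apply_apply_of_mem_E hNK hAskew horth hbL hbE hALL hAE hx y, hFs x hx,
      real_inner_smul_left]
    ring

theorem reducibleNK_r_eigenvalues
    (V : Type) [NormedAddCommGroup V] [InnerProductSpace ℝ V]
    [FiniteDimensional ℝ V]
    (n : ℕ) (hdim : Module.finrank ℝ V = 2 * n)
    (b : OrthonormalBasis (Fin (2 * n)) ℝ V)
    (J : V →ₗ[ℝ] V)
    (A : V →ₗ[ℝ] V →ₗ[ℝ] V)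
    (r F : V →ₗ[ℝ] V)
    (L E : Submodule ℝ V)
    -- almost Hermitian structure, strict nearly Kähler condition
    (hJJ : ∀ x, J (J x) = -x)
    (hJiso : ∀ x y, ⟪J x, J y⟫ = ⟪x, y⟫)
    (hNK : ∀ x, A x x = 0)
    (hstrict : ∀ x, x ≠ 0 → ∃ y, A x y ≠ 0)
    (hAskew : ∀ x y z, ⟪A x y, z⟫ = -⟪A x z, y⟫)
    (hAJ : ∀ x y, A x (J y) = -J (A x y))
    -- the splitting TM = L ⊕ E : orthogonal, J-stable, rank L = 2
    (hcompl : IsCompl L E)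
    (horth : ∀ v ∈ L, ∀ x ∈ E, ⟪v, x⟫ = 0)
    (hJL : ∀ v ∈ L, J v ∈ L) (hJE : ∀ x ∈ E, J x ∈ E)
    (hrankL : Module.finrank ℝ L = 2)
    -- the frame is adapted to the splitting
    (inL : Fin (2 * n) → Prop) [DecidablePred inL]
    (hadapt : ∀ i, if inL i then b i ∈ L else b i ∈ E)
    -- definition of r and of F = −(1/2) Tr_L((∇_· J)(∇_· J))
    (hr : ∀ x y, ⟪r x, y⟫ = ∑ i, ⟪A (b i) x, A (b i) y⟫)
    (hF : ∀ x y, ⟪F x, y⟫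
      = -(1/2 : ℝ) * ∑ i ∈ Finset.univ.filter inL, ⟪A x (A y (b i)), b i⟫)
    -- structural facts from Proposition 4.1
    (k : ℝ) (hk : 0 < k)
    (hFE : ∀ x ∈ E, F x = (k / 4) • x)
    (hAE : ∀ x ∈ E, ∀ y ∈ E, A x y ∈ L) :
    (∀ v ∈ L, r v = (k * (n - 1) / 2) • v)
    ∧ (∀ x ∈ E, r x = k • x) :=
  reducibleNK_r_eigenvalues_general V n b J A r F L E hJJ hJiso hNK hAskew hAJ hcompl horth hJL
    hrankL inL hadapt hr hF k hFE hAE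
end
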